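/- arXiv:1606.08631 — 2 statements merged into one kernel-verified Lean document; each statement's English description precedes it below -/
import Mathlib

section
/- Let V be a finite-dimensional real normed vector space and let F : V → ℝ be a Minkowski norm, i.e.: F is continuous on V, smooth (C^∞) on V \ {0}, positively homogeneous of degree 1 (F(c • v) = c · F(v) for all c > 0, v ≠ 0), F(v) > 0 for all v ≠ 0, and for every u ≠ 0 the second derivative at u of the function E := (1/2) F² is a positive definite symmetric bilinear form on V. Then the fundamental inequality holds: for every v ≠ 0 and every w ∈ V, −F(−w) ≤ (fderiv ℝ F v) w ≤ F(w). -/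
open Set Filter Topology

/-- **The fundamental inequality for Minkowski norms.**
Let `F : V → ℝ` be a Minkowski norm on a finite-dimensional real normed space `V`:
continuous, smooth on `V \ {0}`, positively `1`-homogeneous, positive on nonzero vectors,
and such that for every `u ≠ 0` the second derivative at `u` of `E := (1/2) F²` is a
positive definite symmetric bilinear form. Then for every `v ≠ 0` and every `w`,
`-F (-w) ≤ (fderiv ℝ F v) w ≤ F w`. -/
theorem fundamental_inequality
    {V : Type*} [NormedAddCommGroup V] [NormedSpace ℝ V] [FiniteDimensional ℝ V]
    (F : V → ℝ)
    (hFcont : Continuous F)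
    (hFsmooth : ContDiffOn ℝ (⊤ : ℕ∞) F {v : V | v ≠ 0})
    (hFhom : ∀ (c : ℝ), 0 < c → ∀ v : V, v ≠ 0 → F (c • v) = c * F v)
    (hFpos : ∀ v : V, v ≠ 0 → 0 < F v)
    (E : V → ℝ) (hE : E = fun v => (1 / 2 : ℝ) * (F v) ^ 2)
    (hEsymm : ∀ u : V, u ≠ 0 → ∀ w₁ w₂ : V,
      (fderiv ℝ (fderiv ℝ E) u) w₁ w₂ = (fderiv ℝ (fderiv ℝ E) u) w₂ w₁)
    (hEposdef : ∀ u : V, u ≠ 0 → ∀ w : V, w ≠ 0 →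
      0 < (fderiv ℝ (fderiv ℝ E) u) w w) :
    ∀ v : V, v ≠ 0 → ∀ w : V,
      -F (-w) ≤ (fderiv ℝ F v) w ∧ (fderiv ℝ F v) w ≤ F w := by
  have hopen : IsOpen {v : V | v ≠ 0} := isOpen_ne
  -- E is smooth away from 0
  have hEsm : ContDiffOn ℝ (⊤ : ℕ∞) E {v : V | v ≠ 0} := by
    rw [hE]; exact contDiffOn_const.mul (hFsmooth.pow 2)
  -- F is differentiable at nonzero points
  have hFd : ∀ u : V, u ≠ 0 → HasFDerivAt F (fderiv ℝ F u) u := fun u hu =>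
    ((hFsmooth.contDiffAt (hopen.mem_nhds hu)).differentiableAt (by simp)).hasFDerivAt
  have hEd : ∀ u : V, u ≠ 0 → HasFDerivAt E (fderiv ℝ E u) u := fun u hu =>
    ((hEsm.contDiffAt (hopen.mem_nhds hu)).differentiableAt (by simp)).hasFDerivAt
  have hEd2 : ∀ u : V, u ≠ 0 →
      HasFDerivAt (fderiv ℝ E) (fderiv ℝ (fderiv ℝ E) u) u := fun u hu =>
    (((hEsm.contDiffAt (hopen.mem_nhds hu)).fderiv_right (m := 1) (WithTop.coe_le_coe.2 le_top)).differentiableAt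
      (by simp)).hasFDerivAt
  -- convexity of E along segments avoiding 0
  have hconv : ∀ x y : V, (∀ t ∈ Icc (0:ℝ) 1, x + t • (y - x) ≠ 0) →
      ∀ t ∈ Icc (0:ℝ) 1, E (x + t • (y - x)) ≤ (1 - t) * E x + t * E y := by
    intro x y hseg
    set γ : ℝ → V := fun t => x + t • (y - x) with hγdef
    have hγd : ∀ t : ℝ, HasDerivAt γ (y - x) t := fun t => by
      have h := ((hasDerivAt_id t).smul_const (y - x)).const_add x; rw [one_smul] at h; exact h
    have hγc : Continuous γ := by
      exact continuous_const.add (continuous_id.smul continuous_const)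
    set S : Set ℝ := γ ⁻¹' {u : V | u ≠ 0} with hSdef
    have hSopen : IsOpen S := hopen.preimage hγc
    have hIccS : Icc (0:ℝ) 1 ⊆ S := fun t ht => hseg t ht
    have hg' : ∀ t ∈ S, HasDerivAt (fun s => E (γ s)) (fderiv ℝ E (γ t) (y - x)) t := by
      intro t ht
      exact (hEd (γ t) ht).comp_hasDerivAt t (hγd t)
    have hg'' : ∀ t ∈ S, HasDerivAt (fun s => fderiv ℝ E (γ s) (y - x))
        ((fderiv ℝ (fderiv ℝ E) (γ t)) (y - x) (y - x)) t := by
      intro t ht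
      have h1 : HasDerivAt (fun s => fderiv ℝ E (γ s))
          ((fderiv ℝ (fderiv ℝ E) (γ t)) (y - x)) t :=
        (hEd2 (γ t) ht).comp_hasDerivAt t (hγd t)
      simpa using h1.clm_apply (hasDerivAt_const t (y - x))
    have hcv : ConvexOn ℝ (Icc (0:ℝ) 1) (fun s => E (γ s)) := by
      apply convexOn_of_hasDerivWithinAt2_nonneg (convex_Icc 0 1)
        (f' := fun s => fderiv ℝ E (γ s) (y - x))
        (f'' := fun s => (fderiv ℝ (fderiv ℝ E) (γ s)) (y - x) (y - x))
      · intro t ht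
        exact ((hg' t (hIccS ht)).continuousAt).continuousWithinAt
      · intro t ht
        exact (hg' t (hIccS (interior_subset ht))).hasDerivWithinAt
      · intro t ht
        exact (hg'' t (hIccS (interior_subset ht))).hasDerivWithinAt
      · intro t ht
        rcases eq_or_ne (y - x) 0 with h | h
        · simp [h]
        · exact le_of_lt (hEposdef (γ t) (hIccS (interior_subset ht)) (y - x) h)
    intro t ht
    have h0 : (0:ℝ) ∈ Icc (0:ℝ) 1 := by constructor <;> norm_num
    have h1 : (1:ℝ) ∈ Icc (0:ℝ) 1 := by constructor <;> norm_num
    have hγ0 : γ 0 = x := by simp [γ]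
    have hγ1 : γ 1 = y := by simp [γ]
    have h2 := hcv.2 h0 h1 (show (0:ℝ) ≤ 1 - t by linarith [ht.2])
      (show (0:ℝ) ≤ t from ht.1) (by ring)
    simpa [hγ0, hγ1, smul_eq_mul] using h2
  -- positive homogeneity for inverses and basic facts
  intro v hv w
  -- F 0 = 0
  have hF0 : F 0 = 0 := by
    have h1 : Tendsto (fun c : ℝ => F (c • v)) (𝓝[>] (0:ℝ)) (𝓝 (F 0)) := by
      have h2 : Tendsto (fun c : ℝ => c • v) (𝓝[>] (0:ℝ)) (𝓝 (0:V)) := by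
        have : Tendsto (fun c : ℝ => c • v) (𝓝 (0:ℝ)) (𝓝 ((0:ℝ) • v)) :=
          (continuous_id.smul continuous_const).tendsto 0
        simpa using this.mono_left nhdsWithin_le_nhds
      exact (hFcont.tendsto 0).comp h2
    have h3 : Tendsto (fun c : ℝ => F (c • v)) (𝓝[>] (0:ℝ)) (𝓝 0) := by
      have h4 : Tendsto (fun c : ℝ => c * F v) (𝓝[>] (0:ℝ)) (𝓝 0) := by
        have : Tendsto (fun c : ℝ => c * F v) (𝓝 (0:ℝ)) (𝓝 (0 * F v)) :=
          (continuous_id.mul continuous_const).tendsto 0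
        simpa using this.mono_left nhdsWithin_le_nhds
      apply h4.congr'
      filter_upwards [self_mem_nhdsWithin] with c hc
      exact (hFhom c hc v hv).symm
    exact tendsto_nhds_unique h1 h3
  -- Euler's relation : fderiv F v v = F v
  have hEuler : (fderiv ℝ F v) v = F v := by
    have hs : HasDerivAt (fun c : ℝ => c • v) v 1 := by
      simpa using (hasDerivAt_id (1:ℝ)).smul_const v
    have h1 : HasDerivAt (fun c : ℝ => F (c • v)) ((fderiv ℝ F v) v) 1 := by
      have hl : HasFDerivAt F (fderiv ℝ F v) ((1:ℝ) • v) := by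
        rw [one_smul]; exact hFd v hv
      simpa [Function.comp_def] using hl.comp_hasDerivAt 1 hs
    have h2 : HasDerivAt (fun c : ℝ => F (c • v)) (F v) 1 := by
      have h3 : HasDerivAt (fun c : ℝ => c * F v) (F v) 1 := by
        simpa using (hasDerivAt_id (1:ℝ)).mul_const (F v)
      apply h3.congr_of_eventuallyEq
      filter_upwards [Ioi_mem_nhds (zero_lt_one)] with c hc
      exact hFhom c hc v hv
    exact h1.unique h2
  -- restricted subadditivity
  have hsub : ∀ y : V, (¬ ∃ c : ℝ, y = c • v) → F (v + y) ≤ F v + F y := by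
    intro y hy
    have hy0 : y ≠ 0 := fun h => hy ⟨0, by simp [h]⟩
    set a : ℝ := F v with ha
    set b : ℝ := F y with hb
    have hap : 0 < a := hFpos v hv
    have hbp : 0 < b := hFpos y hy0
    set X : V := a⁻¹ • v with hX
    set Y : V := b⁻¹ • y with hY
    have hFX : F X = 1 := by
      rw [hX, hFhom a⁻¹ (inv_pos.2 hap) v hv]; field_simp; rfl
    have hFY : F Y = 1 := by
      rw [hY, hFhom b⁻¹ (inv_pos.2 hbp) y hy0]; field_simp; rfl
    have hseg : ∀ t ∈ Icc (0:ℝ) 1, X + t • (Y - X) ≠ 0 := by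
      intro t ht h0
      rcases eq_or_ne t 0 with rfl | htne
      · rw [zero_smul, add_zero, hX] at h0
        exact hv (by simpa [inv_ne_zero (ne_of_gt hap)] using smul_eq_zero.1 h0)
      · apply hy
        refine ⟨(b * t⁻¹) * ((t - 1) * a⁻¹), ?_⟩
        have h1 : (t * b⁻¹) • y = ((t - 1) * a⁻¹) • v := by
          have h2 : X + t • (Y - X) = 0 := h0
          rw [hX, hY, smul_sub, smul_smul, smul_smul] at h2
          have h3 : (t * b⁻¹) • y = (t * a⁻¹) • v - a⁻¹ • v := by
            have := h2
            abel_nf at this ⊢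
            linear_combination (norm := module) this
          rw [h3, ← sub_smul]; ring_nf
        calc y = (b * t⁻¹) • ((t * b⁻¹) • y) := by
              rw [smul_smul]
              rw [show (b * t⁻¹) * (t * b⁻¹) = (b * b⁻¹) * (t * t⁻¹) by ring]
              rw [mul_inv_cancel₀ (ne_of_gt hbp), mul_inv_cancel₀ htne, one_mul, one_smul]
          _ = (b * t⁻¹) • (((t - 1) * a⁻¹) • v) := by rw [h1]
          _ = ((b * t⁻¹) * ((t - 1) * a⁻¹)) • v := by rw [smul_smul]
    set t : ℝ := b / (a + b) with htdef
    have habp : 0 < a + b := by linarith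
    have htmem : t ∈ Icc (0:ℝ) 1 := by
      constructor
      · positivity
      · rw [htdef, div_le_one habp]; linarith
    set m : V := X + t • (Y - X) with hm
    have hm0 : m ≠ 0 := hseg t htmem
    have hmeq : m = (a + b)⁻¹ • (v + y) := by
      rw [hm, hX, hY, smul_sub, smul_smul, smul_smul, smul_add]
      have e1 : t * b⁻¹ = (a + b)⁻¹ := by
        rw [htdef]; field_simp
      have e2 : a⁻¹ - t * a⁻¹ = (a + b)⁻¹ := by
        rw [htdef]; field_simp; ring
      calc a⁻¹ • v + ((t * b⁻¹) • y - (t * a⁻¹) • v)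
          = (a⁻¹ - t * a⁻¹) • v + (t * b⁻¹) • y := by
            rw [sub_smul]; abel
        _ = (a + b)⁻¹ • v + (a + b)⁻¹ • y := by rw [e1, e2]
    have hEm : E m ≤ 1 / 2 := by
      have := hconv X Y hseg t htmem
      have hEX : E X = 1 / 2 := by rw [hE]; simp [hFX]
      have hEY : E Y = 1 / 2 := by rw [hE]; simp [hFY]
      rw [hEX, hEY] at this
      calc E m ≤ (1 - t) * (1 / 2) + t * (1 / 2) := this
        _ = 1 / 2 := by ring
    have hFm : F m ≤ 1 := by
      rw [hE] at hEm
      have hEm' : (1 / 2 : ℝ) * F m ^ 2 ≤ 1 / 2 := hEm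
      nlinarith [hFpos m hm0]
    have hvy : v + y = (a + b) • m := by
      rw [hmeq, smul_smul, mul_inv_cancel₀ (ne_of_gt habp), one_smul]
    calc F (v + y) = F ((a + b) • m) := by rw [hvy]
      _ = (a + b) * F m := hFhom (a + b) habp m hm0
      _ ≤ (a + b) * 1 := by
          exact mul_le_mul_of_nonneg_left hFm (le_of_lt habp)
      _ = a + b := by ring
  -- the upper bound in the non-collinear case
  have hupper : ∀ y : V, (¬ ∃ c : ℝ, y = c • v) → (fderiv ℝ F v) y ≤ F y := by
    intro y hy
    have hy0 : y ≠ 0 := fun h => hy ⟨0, by simp [h]⟩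
    have hs : HasDerivAt (fun s : ℝ => v + s • y) y 0 := by
      simpa using ((hasDerivAt_id (0:ℝ)).smul_const y).const_add v
    have hder : HasDerivAt (fun s : ℝ => F (v + s • y)) ((fderiv ℝ F v) y) 0 := by
      have hl : HasFDerivAt F (fderiv ℝ F v) (v + (0:ℝ) • y) := by
        rw [zero_smul, add_zero]; exact hFd v hv
      simpa [Function.comp_def] using hl.comp_hasDerivAt 0 hs
    have htend : Tendsto (slope (fun s : ℝ => F (v + s • y)) 0) (𝓝[>] (0:ℝ))
        (𝓝 ((fderiv ℝ F v) y)) :=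
      (hasDerivAt_iff_tendsto_slope.1 hder).mono_left
        (nhdsWithin_mono _ (fun s hs => ne_of_gt hs))
    refine le_of_tendsto htend ?_
    filter_upwards [self_mem_nhdsWithin] with s hs'
    have hs0 : (0:ℝ) < s := hs'
    have hkey : F (v + s • y) ≤ F v + s * F y := by
      have hns : ¬ ∃ c : ℝ, s • y = c • v := by
        rintro ⟨c, hc⟩
        refine hy ⟨s⁻¹ * c, ?_⟩
        rw [mul_smul, ← hc, smul_smul, inv_mul_cancel₀ (ne_of_gt hs0), one_smul]
      have := hsub (s • y) hns
      rwa [hFhom s hs0 y hy0] at this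
    rw [slope_def_field]
    simp only [zero_smul, add_zero, sub_zero]
    rw [div_le_iff₀ hs0]
    nlinarith [hkey]
  -- put everything together
  by_cases hcol : ∃ c : ℝ, w = c • v
  · obtain ⟨c, rfl⟩ := hcol
    have hfd : (fderiv ℝ F v) (c • v) = c * F v := by
      rw [map_smul, smul_eq_mul, hEuler]
    constructor
    · -- lower bound
      rw [hfd, ← neg_smul]
      rcases lt_trichotomy c 0 with hc | hc | hc
      · rw [hFhom (-c) (by linarith) v hv]
        exact le_of_eq (by ring)
      · subst hc; simp [hF0]
      · have h1 : 0 < F ((-c) • v) := hFpos _ (smul_ne_zero (neg_ne_zero.2 (ne_of_gt hc)) hv)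
        nlinarith [hFpos v hv]
    · -- upper bound
      rw [hfd]
      rcases lt_trichotomy c 0 with hc | hc | hc
      · have h1 : 0 < F (c • v) := hFpos _ (smul_ne_zero (ne_of_lt hc) hv)
        nlinarith [hFpos v hv]
      · subst hc; simp [hF0]
      · rw [hFhom c hc v hv]
  · constructor
    · have hncol : ¬ ∃ c : ℝ, -w = c • v := by
        rintro ⟨c, hc⟩
        exact hcol ⟨-c, by rw [neg_smul, ← hc, neg_neg]⟩
      have := hupper (-w) hncol
      rw [map_neg] at this
      linarith
    · exact hupper w hcol
end

section
/- Let V be a finite-dimensional real normed vector space and let F : V → ℝ be a Minkowski norm, i.e.: F is continuous on V, smooth (C^∞) on V \ {0}, positively homogeneous of degree 1, positive on V \ {0}, and for every u ≠ 0 the second derivative at u of E := (1/2) F² is positive definite. Then for every v ∈ V with F(v) = 1 and every w ∈ V, the derivative of E at v satisfies −F(−w) ≤ (fderiv ℝ E v) w ≤ F(w). -/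
open Set


/-- **Fundamental inequality for the energy on the indicatrix.**
Let `F : V → ℝ` be a Minkowski norm on a finite-dimensional real normed space `V`:
continuous, smooth on `V \ {0}`, positively `1`-homogeneous, positive on nonzero vectors,
and such that for every `u ≠ 0` the second derivative at `u` of `E := (1/2) F²` is
positive definite. Then for every `v` with `F v = 1` and every `w`,
`-F (-w) ≤ (fderiv ℝ E v) w ≤ F w`. -/
theorem energy_derivative_bounds_on_indicatrix
    {V : Type*} [NormedAddCommGroup V] [NormedSpace ℝ V] [FiniteDimensional ℝ V]
    (F : V → ℝ)
    (hFcont : Continuous F)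
    (hFsmooth : ContDiffOn ℝ (⊤ : ℕ∞) F {v : V | v ≠ 0})
    (hFhom : ∀ (c : ℝ), 0 < c → ∀ v : V, v ≠ 0 → F (c • v) = c * F v)
    (hFpos : ∀ v : V, v ≠ 0 → 0 < F v)
    (E : V → ℝ) (hE : E = fun v => (1 / 2 : ℝ) * (F v) ^ 2)
    (hEposdef : ∀ u : V, u ≠ 0 → ∀ w : V, w ≠ 0 →
      0 < (fderiv ℝ (fderiv ℝ E) u) w w) :
    ∀ v : V, F v = 1 → ∀ w : V,
      -F (-w) ≤ (fderiv ℝ E v) w ∧ (fderiv ℝ E v) w ≤ F w := by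
  intro v hv w
  have hsopen : IsOpen {x : V | x ≠ 0} := isOpen_ne
  have hEsm : ContDiffOn ℝ (⊤ : ℕ∞) E {x : V | x ≠ 0} := by
    rw [hE]; exact contDiffOn_const.mul (hFsmooth.pow 2)
  have hEdiff : ∀ x : V, x ≠ 0 → DifferentiableAt ℝ E x := fun x hx =>
    (hEsm.contDiffAt (hsopen.mem_nhds hx)).differentiableAt (by simp)
  have hΦsm : ContDiffOn ℝ (⊤ : ℕ∞) (fderiv ℝ E) {x : V | x ≠ 0} :=
    hEsm.fderiv_of_isOpen hsopen (by simp)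
  have hΦdiff : ∀ x : V, x ≠ 0 → DifferentiableAt ℝ (fderiv ℝ E) x := fun x hx =>
    (hΦsm.contDiffAt (hsopen.mem_nhds hx)).differentiableAt (by simp)
  -- F 0 = 0 when a nonzero vector exists
  have hFzero : ∀ x : V, x ≠ 0 → F 0 = 0 := by
    intro x hx
    have h1 : Filter.Tendsto (fun t : ℝ => F (t • x)) (nhdsWithin 0 (Ioi 0)) (nhds (F 0)) := by
      have hc : Continuous (fun t : ℝ => F (t • x)) :=
        hFcont.comp (continuous_id.smul continuous_const)
      have := hc.tendsto 0
      simpa using this.mono_left nhdsWithin_le_nhds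
    have h2 : Filter.Tendsto (fun t : ℝ => F (t • x)) (nhdsWithin 0 (Ioi 0)) (nhds 0) := by
      have hm : Filter.Tendsto (fun t : ℝ => t * F x) (nhdsWithin 0 (Ioi 0)) (nhds 0) := by
        have := (continuous_id.mul (continuous_const (y := F x))).tendsto 0
        simpa [Pi.mul_def] using this.mono_left nhdsWithin_le_nhds
      refine hm.congr' ?_
      filter_upwards [self_mem_nhdsWithin] with t ht
      exact (hFhom t ht x hx).symm
    exact tendsto_nhds_unique h1 h2
  -- trivial case w = 0
  by_cases hw0 : w = 0
  · subst hw0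
    have hF0 : 0 ≤ F 0 := by
      by_cases hv0 : v = 0
      · rw [← hv0] at *; rw [hv]; norm_num
      · rw [hFzero v hv0]
    simp only [neg_zero, map_zero]
    exact ⟨by linarith, hF0⟩
  · have hv0 : v ≠ 0 := by
      intro h
      rw [h, hFzero w hw0] at hv
      norm_num at hv
    -- homogeneity of E
    have hEhom : ∀ c : ℝ, 0 < c → ∀ x : V, x ≠ 0 → E (c • x) = c ^ 2 * E x := by
      intro c hc x hx
      rw [hE]
      simp only [hFhom c hc x hx]
      ring
    -- Euler's identity
    have euler : (fderiv ℝ E v) v = 2 * E v := by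
      have hd : HasDerivAt (fun t : ℝ => t • v) v 1 := by
        simpa using (hasDerivAt_id (1 : ℝ)).smul_const v
      have hE' : HasFDerivAt E (fderiv ℝ E v) ((fun t : ℝ => t • v) 1) := by
        simpa using (hEdiff v hv0).hasFDerivAt
      have h1 : HasDerivAt (fun t : ℝ => E (t • v)) ((fderiv ℝ E v) v) 1 := by
        have := hE'.comp_hasDerivAt 1 hd
        exact this
      have h2 : HasDerivAt (fun t : ℝ => t ^ 2 * E v) (2 * E v) 1 := by
        have := (hasDerivAt_pow 2 (1 : ℝ)).mul_const (E v)
        simpa using this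
      have heq : (fun t : ℝ => t ^ 2 * E v) =ᶠ[nhds (1 : ℝ)] (fun t : ℝ => E (t • v)) := by
        filter_upwards [eventually_gt_nhds (by norm_num : (0 : ℝ) < 1)] with t ht
        exact (hEhom t ht v hv0).symm
      exact ((h2.congr_of_eventuallyEq heq.symm).unique h1).symm
    -- key convexity estimate
    have key : ∀ u : V, (∀ t ∈ Icc (0 : ℝ) 1, v + t • (u - v) ≠ 0) →
        (fderiv ℝ E v) (u - v) ≤ E u - E v := by
      intro u hseg
      set d := u - v with hdd
      by_cases hd0 : d = 0
      · have : u = v := by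
          have := sub_eq_zero.mp hd0
          exact this
        simp [hd0, this]
      · set γ : ℝ → V := fun t => v + t • d with hγ
        have hγd : ∀ t : ℝ, HasDerivAt γ d t := by
          intro t
          simpa [hγ] using (((hasDerivAt_id t).smul_const d).const_add v)
        set ψ : ℝ → ℝ := fun t => (fderiv ℝ E (γ t)) d with hψdef
        have hφ : ∀ t ∈ Icc (0 : ℝ) 1, HasDerivAt (fun s => E (γ s)) (ψ t) t := by
          intro t ht
          have hfd : HasFDerivAt E (fderiv ℝ E (γ t)) (γ t) :=
            (hEdiff (γ t) (hseg t ht)).hasFDerivAt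
          have := hfd.comp_hasDerivAt t (hγd t)
          exact this
        have hψ : ∀ t ∈ Icc (0 : ℝ) 1,
            HasDerivAt ψ ((fderiv ℝ (fderiv ℝ E) (γ t)) d d) t := by
          intro t ht
          have hfd : HasFDerivAt (fderiv ℝ E) (fderiv ℝ (fderiv ℝ E) (γ t)) (γ t) :=
            (hΦdiff (γ t) (hseg t ht)).hasFDerivAt
          have h1 : HasDerivAt (fun s => fderiv ℝ E (γ s))
              ((fderiv ℝ (fderiv ℝ E) (γ t)) d) t := by
            have := hfd.comp_hasDerivAt t (hγd t)
            exact this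
          have h2 := h1.clm_apply (hasDerivAt_const t d)
          simpa using h2
        obtain ⟨c, hc, hcslope⟩ := exists_hasDerivAt_eq_slope (fun s => E (γ s)) ψ
          (by norm_num : (0 : ℝ) < 1)
          (fun t ht => (hφ t ht).continuousAt.continuousWithinAt)
          (fun t ht => hφ t (Ioo_subset_Icc_self ht))
        have hsub : Icc (0 : ℝ) c ⊆ Icc (0 : ℝ) 1 :=
          Icc_subset_Icc le_rfl hc.2.le
        obtain ⟨c₂, hc₂, hc₂slope⟩ := exists_hasDerivAt_eq_slope ψ
          (fun t => (fderiv ℝ (fderiv ℝ E) (γ t)) d d) hc.1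
          (fun t ht => (hψ t (hsub ht)).continuousAt.continuousWithinAt)
          (fun t ht => hψ t (hsub (Ioo_subset_Icc_self ht)))
        have hc₂mem : c₂ ∈ Icc (0 : ℝ) 1 := hsub (Ioo_subset_Icc_self hc₂)
        have hpos : 0 < (fderiv ℝ (fderiv ℝ E) (γ c₂)) d d :=
          hEposdef (γ c₂) (hseg c₂ hc₂mem) d hd0
        have hψmono : ψ 0 ≤ ψ c := by
          rw [hc₂slope] at hpos
          have := div_pos_iff.mp hpos
          rcases this with ⟨h, _⟩ | ⟨_, h⟩
          · linarith
          · linarith [hc.1]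
        have hγ0 : γ 0 = v := by simp [hγ]
        have hγ1 : γ 1 = u := by simp [hγ, hdd]
        have hslope : ψ c = E u - E v := by
          rw [hcslope, hγ1, hγ0]; ring
        have hψ0 : ψ 0 = (fderiv ℝ E v) d := by rw [hψdef]; simp [hγ0]
        rw [← hψ0]
        linarith [hψmono, hslope]
    -- E values on indicatrix
    have hEv : E v = 1 / 2 := by rw [hE]; simp [hv]
    -- upper bound for arbitrary nonzero w
    have upper : ∀ w : V, w ≠ 0 → (fderiv ℝ E v) w ≤ F w := by
      intro w hw
      have hFw : 0 < F w := hFpos w hw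
      set u := (F w)⁻¹ • w with hu
      have hu0 : u ≠ 0 := smul_ne_zero (inv_ne_zero hFw.ne') hw
      have hFu : F u = 1 := by
        rw [hu, hFhom _ (inv_pos.2 hFw) w hw]
        field_simp
      have hEu : E u = 1 / 2 := by rw [hE]; simp [hFu]
      have hDu : (fderiv ℝ E v) u ≤ 1 := by
        by_cases hseg : ∀ t ∈ Icc (0 : ℝ) 1, v + t • (u - v) ≠ 0
        · have hk := key u hseg
          rw [map_sub, hEu, hEv, euler, hEv] at hk
          linarith
        · push_neg at hseg
          obtain ⟨t, ht, hz⟩ := hseg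
          have ht0 : t ≠ 0 := by
            intro h; rw [h] at hz; simp at hz; exact hv0 hz
          have ht1 : t ≠ 1 := by
            intro h; rw [h] at hz; simp at hz
            exact hu0 hz
          have htpos : 0 < t := lt_of_le_of_ne ht.1 (Ne.symm ht0)
          have huv : u = ((t - 1) / t) • v := by
            have h1 : t • u = (t - 1) • v := by
              rw [smul_sub] at hz
              have h2 : t • u - t • v = -v := eq_neg_of_add_eq_zero_right hz
              rw [sub_eq_iff_eq_add] at h2
              rw [sub_smul, one_smul, h2]
              abel
            have := congrArg (fun x => t⁻¹ • x) h1
            simpa [smul_smul, inv_mul_cancel₀ ht0, div_eq_inv_mul, mul_comm] using this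
          have hneg : (t - 1) / t < 0 :=
            div_neg_of_neg_of_pos (by cases ht with | intro h1 h2 => cases lt_or_eq_of_le h2 with
              | inl h => linarith | inr h => exact absurd h ht1) htpos
          calc (fderiv ℝ E v) u = ((t - 1) / t) * (fderiv ℝ E v) v := by
                rw [huv, map_smul, smul_eq_mul]
            _ = ((t - 1) / t) * 1 := by rw [euler, hEv]; ring_nf
            _ ≤ 1 := by nlinarith
      have hwu : w = F w • u := by rw [hu, smul_inv_smul₀ hFw.ne']
      calc (fderiv ℝ E v) w = F w * (fderiv ℝ E v) u := by
            nth_rewrite 1 [hwu]; rw [map_smul, smul_eq_mul]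
        _ ≤ F w * 1 := by nlinarith
        _ = F w := mul_one _
    refine ⟨?_, upper w hw0⟩
    have := upper (-w) (neg_ne_zero.mpr hw0)
    rw [map_neg] at this
    linarith
end
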